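/- There exist monotone strict preferences for 2 agents over 5 items and a Pareto optimal allocation S such that for every budget profile b and every price vector p, (S, p) is not a competitive equilibrium (the second welfare theorem fails). -/

import Mathlib

open Finset

/-- Total price of a bundle of items. -/
def price {m : ℕ} (p : Fin m → ℝ) (A : Finset (Fin m)) : ℝ := ∑ j ∈ A, p j

/-- An allocation: a partition of all items among the agents. -/
def IsAllocation {n m : ℕ} (S : Fin n → Finset (Fin m)) : Prop :=
  (∀ i j : Fin n, i ≠ j → Disjoint (S i) (S j)) ∧
  Finset.univ.biUnion S = Finset.univ

/-- `r A B` means bundle `B` is weakly preferred to bundle `A`.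
A monotone (ordinal) preference: total, transitive, and monotone w.r.t. inclusion. -/
def IsMonotonePref {m : ℕ} (r : Finset (Fin m) → Finset (Fin m) → Prop) : Prop :=
  (∀ A B, r A B ∨ r B A) ∧
  (∀ A B C, r A B → r B C → r A C) ∧
  (∀ A B : Finset (Fin m), A ⊆ B → r A B)

/-- Strict preference: `B` strictly preferred over `A`. -/
def SPref {m : ℕ} (r : Finset (Fin m) → Finset (Fin m) → Prop)
    (A B : Finset (Fin m)) : Prop := r A B ∧ ¬ r B A

/-- A competitive equilibrium: an allocation together with nonnegative item prices such
that each agent's bundle is within budget and every strictly preferred bundle is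
unaffordable. -/
def IsCE {n m : ℕ} (pref : Fin n → Finset (Fin m) → Finset (Fin m) → Prop)
    (b : Fin n → ℝ) (S : Fin n → Finset (Fin m)) (p : Fin m → ℝ) : Prop :=
  IsAllocation S ∧ (∀ j, 0 ≤ p j) ∧
  ∀ i, price p (S i) ≤ b i ∧ ∀ T, SPref (pref i) (S i) T → b i < price p T

/-- A strict preference: no two distinct bundles are indifferent. -/
def IsStrict {m : ℕ} (r : Finset (Fin m) → Finset (Fin m) → Prop) : Prop :=
  ∀ A B : Finset (Fin m), r A B → r B A → A = B

/-- Pareto optimality: every other allocation makes some agent strictly worse off. -/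
def ParetoOptimal {n m : ℕ} (pref : Fin n → Finset (Fin m) → Finset (Fin m) → Prop)
    (S : Fin n → Finset (Fin m)) : Prop :=
  ∀ S' : Fin n → Finset (Fin m), IsAllocation S' → S' ≠ S →
    ∃ i, SPref (pref i) (S' i) (S i)

/-- Alice's valuation in Example 1 (items A,B,C,D,E = 0,1,2,3,4). -/
def vAlice (S : Finset (Fin 5)) : ℝ :=
  (if (0 : Fin 5) ∈ S ∧ (1 : Fin 5) ∈ S then 700
   else (if (0 : Fin 5) ∈ S then 10 else 0) + (if (1 : Fin 5) ∈ S then 20 else 0)) +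
  (if (2 : Fin 5) ∈ S then 201 else 0) + (if (3 : Fin 5) ∈ S then 202 else 0) +
  (if (4 : Fin 5) ∈ S then 203 else 0)

/-- Bob's valuation in Example 1. -/
def vBob (S : Finset (Fin 5)) : ℝ :=
  (if (0 : Fin 5) ∈ S ∧ (1 : Fin 5) ∈ S then 502
   else (if (0 : Fin 5) ∈ S then 500 else 0) + (if (1 : Fin 5) ∈ S then 501 else 0)) +
  (if (2 : Fin 5) ∈ S then 201 else 0) + (if (3 : Fin 5) ∈ S then 202 else 0) +
  (if (4 : Fin 5) ∈ S then 203 else 0)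

/-- The ordinal preference profile of Example 1 (agent 0 = Alice, agent 1 = Bob). -/
def prefEx1 : Fin 2 → Finset (Fin 5) → Finset (Fin 5) → Prop :=
  fun i A B => if i = 0 then vAlice A ≤ vAlice B else vBob A ≤ vBob B

/-! ### Auxiliary definitions -/

/-- ℕ-valued version of Alice's valuation. -/
def wA (S : Finset (Fin 5)) : ℕ :=
  (if (0 : Fin 5) ∈ S ∧ (1 : Fin 5) ∈ S then 700
   else (if (0 : Fin 5) ∈ S then 10 else 0) + (if (1 : Fin 5) ∈ S then 20 else 0)) +
  (if (2 : Fin 5) ∈ S then 201 else 0) + (if (3 : Fin 5) ∈ S then 202 else 0) +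
  (if (4 : Fin 5) ∈ S then 203 else 0)

/-- ℕ-valued version of Bob's valuation. -/
def wB (S : Finset (Fin 5)) : ℕ :=
  (if (0 : Fin 5) ∈ S ∧ (1 : Fin 5) ∈ S then 502
   else (if (0 : Fin 5) ∈ S then 500 else 0) + (if (1 : Fin 5) ∈ S then 501 else 0)) +
  (if (2 : Fin 5) ∈ S then 201 else 0) + (if (3 : Fin 5) ∈ S then 202 else 0) +
  (if (4 : Fin 5) ∈ S then 203 else 0)

def wF : Fin 2 → Finset (Fin 5) → ℕ := fun i => if i = 0 then wA else wB

/-- Injective key for tie-breaking. -/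
def keyN (S : Finset (Fin 5)) : ℕ := ∑ j ∈ S, 2 ^ (j : ℕ)

/-- Lexicographic strict-monotone preferences. -/
def myPref : Fin 2 → Finset (Fin 5) → Finset (Fin 5) → Prop :=
  fun i A B => wF i A < wF i B ∨ (wF i A = wF i B ∧ keyN A ≤ keyN B)

instance (i : Fin 2) (A B : Finset (Fin 5)) : Decidable (myPref i A B) := by
  unfold myPref; exact inferInstance

instance {m : ℕ} (r : Finset (Fin m) → Finset (Fin m) → Prop) [DecidableRel r]
    (A B : Finset (Fin m)) : Decidable (SPref r A B) := by
  unfold SPref; exact inferInstance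

instance {n m : ℕ} (S : Fin n → Finset (Fin m)) : Decidable (IsAllocation S) := by
  unfold IsAllocation; exact inferInstance

lemma wF_mono : ∀ (i : Fin 2) (A B : Finset (Fin 5)), A ⊆ B → wF i A ≤ wF i B := by decide

lemma keyN_inj : ∀ A B : Finset (Fin 5), keyN A = keyN B → A = B := by decide

lemma keyN_mono {A B : Finset (Fin 5)} (h : A ⊆ B) : keyN A ≤ keyN B :=
  Finset.sum_le_sum_of_subset h

lemma myPref_props : ∀ i, IsMonotonePref (myPref i) ∧ IsStrict (myPref i) := by
  intro i
  refine ⟨⟨?_, ?_, ?_⟩, ?_⟩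
  · intro A B
    rcases lt_trichotomy (wF i A) (wF i B) with h | h | h
    · exact Or.inl (Or.inl h)
    · rcases Nat.le_total (keyN A) (keyN B) with hk | hk
      · exact Or.inl (Or.inr ⟨h, hk⟩)
      · exact Or.inr (Or.inr ⟨h.symm, hk⟩)
    · exact Or.inr (Or.inl h)
  · rintro A B C (h1 | ⟨h1, k1⟩) (h2 | ⟨h2, k2⟩)
    · exact Or.inl (h1.trans h2)
    · exact Or.inl (h2 ▸ h1)
    · exact Or.inl (h1 ▸ h2)
    · exact Or.inr ⟨h1.trans h2, k1.trans k2⟩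
  · intro A B h
    rcases lt_or_eq_of_le (wF_mono i A B h) with h' | h'
    · exact Or.inl h'
    · exact Or.inr ⟨h', keyN_mono h⟩
  · rintro A B (h1 | ⟨h1, k1⟩) (h2 | ⟨h2, k2⟩) <;>
      first
      | exact absurd h2 (by omega)
      | exact keyN_inj A B (le_antisymm k1 k2)

def Sx : Fin 2 → Finset (Fin 5) := fun i => if i = 0 then {2, 3} else {0, 1, 4}

lemma Sx_alloc : IsAllocation Sx := by
  constructor
  · decide
  · decide

lemma pareto_key : ∀ X : Finset (Fin 5), X ≠ {2, 3} →
    SPref (myPref 0) X {2, 3} ∨ SPref (myPref 1) Xᶜ {0, 1, 4} := by decide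

lemma compl_23 : ({2, 3} : Finset (Fin 5))ᶜ = {0, 1, 4} := by decide

lemma Sx_pareto : ParetoOptimal myPref Sx := by
  intro S' ⟨hdisj, huniv⟩ hne
  have hc : S' 1 = (S' 0)ᶜ := by
    ext x
    simp only [Finset.mem_compl]
    constructor
    · intro h1 h0
      exact (hdisj 0 1 (by decide)).forall_ne_finset h0 h1 rfl
    · intro h0
      have hx : x ∈ Finset.univ.biUnion S' := by rw [huniv]; exact Finset.mem_univ x
      rcases Finset.mem_biUnion.1 hx with ⟨i, -, hi⟩
      fin_cases i
      · exact absurd hi h0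
      · exact hi
  have hX : S' 0 ≠ {2, 3} := by
    intro h
    apply hne
    funext i
    fin_cases i
    · exact h
    · show S' 1 = Sx 1
      rw [hc, h, compl_23]; rfl
  rcases pareto_key (S' 0) hX with h | h
  · exact ⟨0, h⟩
  · refine ⟨1, ?_⟩
    rw [hc]
    exact h


/-- the second welfare theorem fails: there exist strict monotone
preferences for 2 agents over 5 items and a Pareto optimal allocation that is not
supported in a CE for any (positive) budget profile and any prices. -/
theorem no_second_welfare_theorem :
    ∃ (pref : Fin 2 → Finset (Fin 5) → Finset (Fin 5) → Prop)
      (S : Fin 2 → Finset (Fin 5)),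
      (∀ i, IsMonotonePref (pref i) ∧ IsStrict (pref i)) ∧
      IsAllocation S ∧ ParetoOptimal pref S ∧
      ∀ (b : Fin 2 → ℝ) (p : Fin 5 → ℝ), (∀ i, 0 < b i) → ¬ IsCE pref b S p := by
  refine ⟨myPref, Sx, myPref_props, Sx_alloc, Sx_pareto, ?_⟩
  intro b p _ hCE
  obtain ⟨-, -, hdem⟩ := hCE
  obtain ⟨hb0, hp0⟩ := hdem 0
  obtain ⟨hb1, hp1⟩ := hdem 1
  have h1 : b 0 < price p {0, 1} := hp0 {0, 1} (by decide)
  have h2 : b 1 < price p {0, 3, 4} := hp1 {0, 3, 4} (by decide)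
  have h3 : b 1 < price p {1, 2, 4} := hp1 {1, 2, 4} (by decide)
  have e0 : price p (Sx 0) = p 2 + p 3 := by
    simp [Sx, price, Finset.sum_insert, Finset.sum_singleton]
  have e1 : price p (Sx 1) = p 0 + p 1 + p 4 := by
    simp [Sx, price, Finset.sum_insert, Finset.sum_singleton]; ring
  have e2 : price p ({0, 1} : Finset (Fin 5)) = p 0 + p 1 := by
    simp [price, Finset.sum_insert, Finset.sum_singleton]
  have e3 : price p ({0, 3, 4} : Finset (Fin 5)) = p 0 + p 3 + p 4 := by
    simp [price, Finset.sum_insert, Finset.sum_singleton]; ring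
  have e4 : price p ({1, 2, 4} : Finset (Fin 5)) = p 1 + p 2 + p 4 := by
    simp [price, Finset.sum_insert, Finset.sum_singleton]; ring
  rw [e0] at hb0
  rw [e1] at hb1
  rw [e2] at h1
  rw [e3] at h2
  rw [e4] at h3
  linarith
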